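/- arXiv:1504.00716 — 7 statements merged into one kernel-verified Lean document; each statement's English description precedes it below -/
import Mathlib

section
/- Let t₀ ∈ ℝ, r, a₁, a₂, a₃ > 0, let g, h : ℝ → ℝ be nonnegative continuous functions, and let y : ℝ → ℝ be a nonnegative function, differentiable on [t₀, ∞), satisfying y'(t) ≤ g(t)·y(t) + h(t) for all t ≥ t₀. Assume that for all t ≥ t₀: ∫_{t}^{t+r} g(s) ds ≤ a₁, ∫_{t}^{t+r} h(s) ds ≤ a₂, and ∫_{t}^{t+r} y(s) ds ≤ a₃. Then y(t + r) ≤ (a₃/r + a₂)·e^{a₁} for all t ≥ t₀. -/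
open intervalIntegral Set

/-- **Uniform Gronwall Lemma**. -/
theorem uniform_gronwall_lemma (t₀ r a₁ a₂ a₃ : ℝ)
    (hr : 0 < r) (ha₁ : 0 < a₁) (ha₂ : 0 < a₂) (ha₃ : 0 < a₃)
    (g h y y' : ℝ → ℝ)
    (hg : Continuous g) (hh : Continuous h)
    (hg0 : ∀ t, 0 ≤ g t) (hh0 : ∀ t, 0 ≤ h t) (hy0 : ∀ t, 0 ≤ y t)
    (hy : ∀ t ∈ Set.Ici t₀, HasDerivWithinAt y (y' t) (Set.Ici t₀) t)
    (hineq : ∀ t ∈ Set.Ici t₀, y' t ≤ g t * y t + h t)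
    (hgint : ∀ t ∈ Set.Ici t₀, (∫ s in t..(t + r), g s) ≤ a₁)
    (hhint : ∀ t ∈ Set.Ici t₀, (∫ s in t..(t + r), h s) ≤ a₂)
    (hyint : ∀ t ∈ Set.Ici t₀, (∫ s in t..(t + r), y s) ≤ a₃) :
    ∀ t ∈ Set.Ici t₀, y (t + r) ≤ (a₃ / r + a₂) * Real.exp a₁ := by
  have hycont : ContinuousOn y (Set.Ici t₀) := fun u hu => (hy u hu).continuousWithinAt
  intro t ht
  have ht' : t₀ ≤ t := ht
  have key : ∀ s ∈ Set.Icc t (t + r), y (t + r) ≤ (y s + a₂) * Real.exp a₁ := by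
    intro s hs
    obtain ⟨hts, hstr⟩ := hs
    have hst0 : t₀ ≤ s := le_trans ht' hts
    set G : ℝ → ℝ := fun u => ∫ v in s..u, g v with hGdef
    set H : ℝ → ℝ := fun u => ∫ v in s..u, h v with hHdef
    set F : ℝ → ℝ := fun u => y u * Real.exp (-(G u)) - H u with hFdef
    have hGderiv : ∀ u, HasDerivAt G (g u) u := fun u =>
      integral_hasDerivAt_right (hg.intervalIntegrable _ _)
        (hg.stronglyMeasurableAtFilter _ _) hg.continuousAt
    have hHderiv : ∀ u, HasDerivAt H (h u) u := fun u =>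
      integral_hasDerivAt_right (hh.intervalIntegrable _ _)
        (hh.stronglyMeasurableAtFilter _ _) hh.continuousAt
    have hGcont : Continuous G := by
      rw [continuous_iff_continuousAt]; exact fun u => (hGderiv u).continuousAt
    have hHcont : Continuous H := by
      rw [continuous_iff_continuousAt]; exact fun u => (hHderiv u).continuousAt
    -- F has derivative at interior points
    have hFderiv : ∀ u ∈ Set.Ioo s (t + r),
        HasDerivAt F (y' u * Real.exp (-(G u)) + y u * (Real.exp (-(G u)) * (-(g u))) - h u) u := by
      intro u hu
      have hu0 : t₀ < u := lt_of_le_of_lt hst0 hu.1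
      have hyu : HasDerivAt y (y' u) u :=
        (hy u hu0.le).hasDerivAt (Ici_mem_nhds hu0)
      have hE : HasDerivAt (fun u => Real.exp (-(G u))) (Real.exp (-(G u)) * (-(g u))) u :=
        ((hGderiv u).neg).exp
      exact (hyu.mul hE).sub (hHderiv u)
    have hFanti : AntitoneOn F (Set.Icc s (t + r)) := by
      apply antitoneOn_of_deriv_nonpos (convex_Icc _ _)
      · apply ContinuousOn.sub
        · exact ((hycont.mono (fun u hu => le_trans hst0 hu.1)).mul
            ((hGcont.neg.rexp).continuousOn))
        · exact hHcont.continuousOn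
      · rw [interior_Icc]
        exact fun u hu => ((hFderiv u hu).differentiableAt).differentiableWithinAt
      · rw [interior_Icc]
        intro u hu
        rw [(hFderiv u hu).deriv]
        have hu0 : t₀ ≤ u := le_trans hst0 hu.1.le
        have hG0 : 0 ≤ G u := intervalIntegral.integral_nonneg hu.1.le (fun v _ => hg0 v)
        have hE1 : Real.exp (-(G u)) ≤ 1 := Real.exp_le_one_iff.mpr (neg_nonpos.mpr hG0)
        have hEpos : 0 < Real.exp (-(G u)) := Real.exp_pos _
        have h1 : y' u ≤ g u * y u + h u := hineq u hu0
        nlinarith [hh0 u, hy0 u, mul_le_mul_of_nonneg_right h1 hEpos.le]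
    have hmem1 : s ∈ Set.Icc s (t + r) := ⟨le_refl s, le_trans hstr (by linarith)⟩
    have hmain : F (t + r) ≤ F s :=
      hFanti hmem1 ⟨hstr, le_refl _⟩ hstr
    have hFs : F s = y s := by
      simp [hFdef, hGdef, hHdef, intervalIntegral.integral_same]
    -- H (t+r) ≤ a₂ and G (t+r) ≤ a₁
    have hsplit : ∀ (f : ℝ → ℝ), Continuous f → (∀ v, 0 ≤ f v) →
        (∫ v in s..(t + r), f v) ≤ ∫ v in s..(s + r), f v := by
      intro f hf hf0
      have h1 : (∫ v in s..(t + r), f v) + ∫ v in (t + r)..(s + r), f v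
          = ∫ v in s..(s + r), f v :=
        intervalIntegral.integral_add_adjacent_intervals
          (hf.intervalIntegrable _ _) (hf.intervalIntegrable _ _)
      have h2 : 0 ≤ ∫ v in (t + r)..(s + r), f v :=
        intervalIntegral.integral_nonneg (by linarith) (fun v _ => hf0 v)
      linarith
    have hHle : H (t + r) ≤ a₂ :=
      le_trans (hsplit h hh hh0) (hhint s hst0)
    have hGle : G (t + r) ≤ a₁ :=
      le_trans (hsplit g hg hg0) (hgint s hst0)
    -- combine
    have h3 : y (t + r) * Real.exp (-(G (t + r))) ≤ y s + a₂ := by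
      have := hmain
      rw [hFs] at this
      simp only [hFdef] at this
      linarith
    have hEpos : 0 < Real.exp (-(G (t + r))) := Real.exp_pos _
    have h4 : y (t + r) ≤ (y s + a₂) * Real.exp (G (t + r)) := by
      rw [Real.exp_neg] at h3
      have e := Real.exp_pos (G (t + r))
      calc y (t + r) = y (t + r) * (Real.exp (G (t + r)))⁻¹ * Real.exp (G (t + r)) := by
            field_simp
        _ ≤ (y s + a₂) * Real.exp (G (t + r)) := mul_le_mul_of_nonneg_right h3 e.le
    refine le_trans h4 (mul_le_mul_of_nonneg_left (Real.exp_le_exp.mpr hGle) ?_)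
    have := hy0 s; linarith
  -- integrate the key inequality over s ∈ [t, t+r]
  have hsub : Set.uIcc t (t + r) ⊆ Set.Ici t₀ := by
    rw [Set.uIcc_of_le (by linarith)]
    exact fun u hu => le_trans ht' hu.1
  have hyint' : IntervalIntegrable y MeasureTheory.volume t (t + r) :=
    (hycont.mono hsub).intervalIntegrable
  have hint2 : IntervalIntegrable (fun s => (y s + a₂) * Real.exp a₁)
      MeasureTheory.volume t (t + r) :=
    ((hyint'.add intervalIntegrable_const).mul_const _)
  have hstep : r * y (t + r) ≤ ((∫ s in t..(t + r), y s) + r * a₂) * Real.exp a₁ := by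
    have h5 : (∫ _ in t..(t + r), y (t + r)) ≤ ∫ s in t..(t + r), (y s + a₂) * Real.exp a₁ :=
      intervalIntegral.integral_mono_on (by linarith) intervalIntegrable_const hint2
        (fun s hs => key s hs)
    rw [intervalIntegral.integral_const] at h5
    have h6 : (∫ s in t..(t + r), (y s + a₂) * Real.exp a₁)
        = ((∫ s in t..(t + r), y s) + r * a₂) * Real.exp a₁ := by
      rw [intervalIntegral.integral_mul_const, intervalIntegral.integral_add hyint'
        intervalIntegrable_const, intervalIntegral.integral_const]
      simp only [smul_eq_mul]
      ring
    rw [h6] at h5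
    simpa [smul_eq_mul, add_sub_cancel_left] using h5
  have h7 : ((∫ s in t..(t + r), y s) + r * a₂) * Real.exp a₁ ≤ (a₃ + r * a₂) * Real.exp a₁ := by
    have := hyint t ht
    nlinarith [Real.exp_pos a₁]
  have h8 : r * y (t + r) ≤ (a₃ + r * a₂) * Real.exp a₁ := le_trans hstep h7
  rw [div_add' _ _ _ (ne_of_gt hr), div_mul_eq_mul_div, le_div_iff₀ hr]
  nlinarith
end

section
/- Let λ > 0, a₁ ≥ 0, t₀ > 0, let g : ℝ → ℝ be a nonnegative continuous function, and let y : ℝ → ℝ be a nonnegative function, differentiable on [t₀, ∞), satisfying y'(t) + λ·y(t) ≤ g(t) for all t ≥ t₀ and ∫_{t}^{t+1} g(s) ds ≤ a₁ for all t ≥ t₀. Then for every ε > 0 there exists t* ≥ t₀ (depending on ε, t₀ and y(t₀)) such that for all t ≥ t*, y(t) ≤ a₁·e^{2λ}/(e^{λ} − 1) + ε; in particular y is eventually bounded by a constant depending only on λ and a₁, and not on the initial value y(t₀). -/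
/-!
Multiplying by the integrating factor `exp (lam * t)` shows that
`exp (lam * t) * y t - ∫ s in t₀..t, exp (lam * s) * g s` is antitone. Over one unit of time this
gives `y (u + 1) ≤ exp (-lam) * y u + a₁` and `y t ≤ y u + a₁` for `t ∈ [u, u + 1]`. Iterating the
first inequality, the initial value is damped by `exp (-lam * n)` and the forcing accumulates to at
most `a₁ / (1 - exp (-lam)) = a₁ * exp lam / (exp lam - 1)`; the second inequality fills the gaps
between integer times, and `a₁ * exp lam / (exp lam - 1) + a₁ ≤ a₁ * exp (2 * lam) / (exp lam - 1)`.
-/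

open Real Set Filter

section IntegratingFactor

variable {lam t₀ : ℝ} {g y y' : ℝ → ℝ}

theorem antitoneOn_exp_mul_sub_integral (hg : Continuous g)
    (hy : ∀ t ∈ Ici t₀, HasDerivWithinAt y (y' t) (Ici t₀) t)
    (hineq : ∀ t ∈ Ici t₀, y' t + lam * y t ≤ g t) :
    AntitoneOn (fun t ↦ exp (lam * t) * y t - ∫ s in t₀..t, exp (lam * s) * g s) (Ici t₀) := by
  have hexp : ∀ t, HasDerivAt (fun t ↦ exp (lam * t)) (exp (lam * t) * lam) t := fun t ↦
    ((hasDerivAt_id t).const_mul lam).exp.congr_deriv (by simp)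
  have hint : ∀ t, HasDerivAt (fun t ↦ ∫ s in t₀..t, exp (lam * s) * g s)
      (exp (lam * t) * g t) t := fun t ↦
    ((continuous_exp.comp (continuous_const_mul lam)).mul hg).integral_hasStrictDerivAt t₀ t
      |>.hasDerivAt
  have hF : ∀ t ∈ Ici t₀, HasDerivWithinAt
      (fun t ↦ exp (lam * t) * y t - ∫ s in t₀..t, exp (lam * s) * g s)
      (exp (lam * t) * (y' t + lam * y t - g t)) (Ici t₀) t := fun t ht ↦
    (((hexp t).hasDerivWithinAt.mul (hy t ht)).sub (hint t).hasDerivWithinAt).congr_deriv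
      (by ring)
  refine antitoneOn_of_hasDerivWithinAt_nonpos (convex_Ici t₀)
    (f' := fun t ↦ exp (lam * t) * (y' t + lam * y t - g t))
    (fun t ht ↦ (hF t ht).continuousWithinAt) (fun t ht ↦ ?_) (fun t ht ↦ ?_)
  · rw [interior_Ici] at ht ⊢
    exact (hF t (Ioi_subset_Ici_self ht)).mono Ioi_subset_Ici_self
  · rw [interior_Ici] at ht
    exact mul_nonpos_of_nonneg_of_nonpos (exp_pos _).le
      (by linarith [hineq t (Ioi_subset_Ici_self ht)])

theorem exp_mul_le_exp_mul_add_integral (hg : Continuous g)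
    (hy : ∀ t ∈ Ici t₀, HasDerivWithinAt y (y' t) (Ici t₀) t)
    (hineq : ∀ t ∈ Ici t₀, y' t + lam * y t ≤ g t) {u t : ℝ} (hu : t₀ ≤ u) (hut : u ≤ t) :
    exp (lam * t) * y t ≤ exp (lam * u) * y u + ∫ s in u..t, exp (lam * s) * g s := by
  have hanti := antitoneOn_exp_mul_sub_integral hg hy hineq hu (hu.trans hut) hut
  have hcont : Continuous fun s ↦ exp (lam * s) * g s :=
    (continuous_exp.comp (continuous_const_mul lam)).mul hg
  have hsplit : (∫ s in t₀..u, exp (lam * s) * g s) + (∫ s in u..t, exp (lam * s) * g s) =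
      ∫ s in t₀..t, exp (lam * s) * g s :=
    intervalIntegral.integral_add_adjacent_intervals
      (hcont.intervalIntegrable t₀ u) (hcont.intervalIntegrable u t)
  simp only at hanti
  linarith

theorem le_exp_mul_sub_mul_add_of_integral_le (hlam : 0 ≤ lam) (hg : Continuous g)
    (hg0 : ∀ t, 0 ≤ g t) (hy : ∀ t ∈ Ici t₀, HasDerivWithinAt y (y' t) (Ici t₀) t)
    (hineq : ∀ t ∈ Ici t₀, y' t + lam * y t ≤ g t) {a u t : ℝ} (hu : t₀ ≤ u)
    (hgu : ∫ s in u..u + 1, g s ≤ a) (hut : u ≤ t) (htu : t ≤ u + 1) :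
    y t ≤ exp (lam * (u - t)) * y u + a := by
  have hweight : ∫ s in u..t, exp (lam * s) * g s ≤ exp (lam * t) * ∫ s in u..t, g s := by
    rw [← intervalIntegral.integral_const_mul]
    refine intervalIntegral.integral_mono_on hut
      (((continuous_exp.comp (continuous_const_mul lam)).mul hg).intervalIntegrable u t)
      ((continuous_const.mul hg).intervalIntegrable u t) fun s hs ↦ ?_
    gcongr
    exacts [hg0 s, hs.2]
  have hunit : ∫ s in u..t, g s ≤ a :=
    (intervalIntegral.integral_mono_interval le_rfl hut htu
      (Eventually.of_forall hg0) (hg.intervalIntegrable u (u + 1))).trans hgu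
  refine le_of_mul_le_mul_left ?_ (exp_pos (lam * t))
  calc exp (lam * t) * y t
      ≤ exp (lam * u) * y u + exp (lam * t) * a := by
        have := exp_mul_le_exp_mul_add_integral hg hy hineq hu hut
        have := mul_le_mul_of_nonneg_left hunit (exp_pos (lam * t)).le
        linarith
    _ = exp (lam * t) * (exp (lam * (u - t)) * y u + a) := by
        rw [mul_add, ← mul_assoc, ← exp_add]
        ring_nf

end IntegratingFactor

theorem le_pow_mul_add_of_le_mul_add {x : ℕ → ℝ} {q a B : ℝ} (hq : 0 ≤ q) (hB0 : 0 ≤ B)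
    (hB : q * B + a ≤ B) (hx : ∀ n, x (n + 1) ≤ q * x n + a) (n : ℕ) :
    x n ≤ q ^ n * x 0 + B := by
  induction n with
  | zero => simpa using hB0
  | succ n ih =>
    calc x (n + 1) ≤ q * (q ^ n * x 0 + B) + a := (hx n).trans (by gcongr)
      _ ≤ q ^ (n + 1) * x 0 + B := by rw [pow_succ]; linarith

theorem eventually_le_add_of_unit_steps {y : ℝ → ℝ} {t₀ q a B : ℝ} (hq0 : 0 ≤ q) (hq1 : q < 1)
    (hB0 : 0 ≤ B) (hB : q * B + a ≤ B) (hstep : ∀ u ≥ t₀, y (u + 1) ≤ q * y u + a)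
    (hgap : ∀ u ≥ t₀, ∀ t ∈ Icc u (u + 1), y t ≤ y u + a) :
    ∀ ε > (0 : ℝ), ∃ tstar, t₀ ≤ tstar ∧ ∀ t ≥ tstar, y t ≤ B + a + ε := by
  intro ε hε
  have hdecay : Tendsto (fun n : ℕ ↦ q ^ n * y t₀) atTop (nhds 0) := by
    simpa using (tendsto_pow_atTop_nhds_zero_of_lt_one hq0 hq1).mul_const (y t₀)
  obtain ⟨N, hN⟩ := eventually_atTop.1 (hdecay.eventually (eventually_le_nhds hε))
  have hiter : ∀ n : ℕ, y (t₀ + n) ≤ q ^ n * y t₀ + B := by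
    simpa using le_pow_mul_add_of_le_mul_add (x := fun n : ℕ ↦ y (t₀ + n)) hq0 hB0 hB
      fun n ↦ by simpa [add_assoc] using hstep (t₀ + n) (by simp)
  refine ⟨t₀ + N, by simp, fun t ht ↦ ?_⟩
  have ht₀ : 0 ≤ t - t₀ := by linarith [(N.cast_nonneg : (0 : ℝ) ≤ N)]
  set n := ⌊t - t₀⌋₊
  have hNn : N ≤ n := Nat.le_floor (by linarith)
  have hgap' := hgap (t₀ + n) (by simp) t
    ⟨by linarith [Nat.floor_le ht₀], by linarith [Nat.lt_floor_add_one (t - t₀)]⟩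
  linarith [hiter n, hN n hNn]

theorem mul_div_one_sub_add_self {q a : ℝ} (hq : q ≠ 1) : q * (a / (1 - q)) + a = a / (1 - q) := by
  field_simp [sub_ne_zero.2 hq.symm]
  ring

theorem div_one_sub_exp_neg_add_le {lam a : ℝ} (hlam : 0 < lam) (ha : 0 ≤ a) :
    a / (1 - exp (-lam)) + a ≤ a * exp (2 * lam) / (exp lam - 1) := by
  have hE : 0 < exp lam - 1 := by linarith [add_one_lt_exp hlam.ne']
  have hE2 : exp (2 * lam) = exp lam * exp lam := by rw [← exp_add, two_mul]
  have hB : a / (1 - (exp lam)⁻¹) = a * exp lam / (exp lam - 1) := by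
    field_simp
  rw [exp_neg, hE2, hB, div_add' _ _ _ hE.ne', div_le_div_iff_of_pos_right hE]
  nlinarith [mul_nonneg ha (sq_nonneg (exp lam - 1))]

theorem uniform_gronwall_variant_general (lam a₁ t₀ : ℝ)
    (hlam : 0 < lam) (ha₁ : 0 ≤ a₁)
    (g y y' : ℝ → ℝ) (hg : Continuous g)
    (hg0 : ∀ t, 0 ≤ g t) (hy0 : ∀ t, 0 ≤ y t)
    (hy : ∀ t ∈ Set.Ici t₀, HasDerivWithinAt y (y' t) (Set.Ici t₀) t)
    (hineq : ∀ t ∈ Set.Ici t₀, y' t + lam * y t ≤ g t)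
    (hgint : ∀ t ∈ Set.Ici t₀, (∫ s in t..(t + 1), g s) ≤ a₁) :
    ∀ ε > (0 : ℝ), ∃ tstar : ℝ, t₀ ≤ tstar ∧
      ∀ t ≥ tstar, y t ≤ a₁ * Real.exp (2 * lam) / (Real.exp lam - 1) + ε := by
  intro ε hε
  have hq1 : exp (-lam) < 1 := exp_lt_one_iff.2 (neg_lt_zero.2 hlam)
  have hunit := fun u (hu : t₀ ≤ u) t ↦
    le_exp_mul_sub_mul_add_of_integral_le hlam.le hg hg0 hy hineq hu (hgint u hu) (t := t)
  have hstep : ∀ u ≥ t₀, y (u + 1) ≤ exp (-lam) * y u + a₁ := fun u hu ↦ by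
    simpa using hunit u hu (u + 1) (by linarith) le_rfl
  have hgap : ∀ u ≥ t₀, ∀ t ∈ Icc u (u + 1), y t ≤ y u + a₁ := fun u hu t ht ↦ by
    have hdamp : exp (lam * (u - t)) ≤ 1 :=
      exp_le_one_iff.2 (mul_nonpos_of_nonneg_of_nonpos hlam.le (by linarith [ht.1]))
    linarith [hunit u hu t ht.1 ht.2, mul_le_of_le_one_left (hy0 u) hdamp]
  obtain ⟨tstar, htstar, hbound⟩ := eventually_le_add_of_unit_steps (exp_pos _).le hq1
    (div_nonneg ha₁ (by linarith)) (mul_div_one_sub_add_self hq1.ne).le hstep hgap ε hε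
  exact ⟨tstar, htstar, fun t ht ↦
    (hbound t ht).trans (by linarith [div_one_sub_exp_neg_add_le hlam ha₁])⟩

/-- Variant of the uniform Gronwall lemma: a linearly damped differential inequality with
forcing whose integral over every unit interval is bounded by `a₁` gives an eventual bound
independent of the initial data. -/
theorem uniform_gronwall_variant (lam a₁ t₀ : ℝ)
    (hlam : 0 < lam) (ha₁ : 0 ≤ a₁) (ht₀ : 0 < t₀)
    (g y y' : ℝ → ℝ) (hg : Continuous g)
    (hg0 : ∀ t, 0 ≤ g t) (hy0 : ∀ t, 0 ≤ y t)
    (hy : ∀ t ∈ Set.Ici t₀, HasDerivWithinAt y (y' t) (Set.Ici t₀) t)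
    (hineq : ∀ t ∈ Set.Ici t₀, y' t + lam * y t ≤ g t)
    (hgint : ∀ t ∈ Set.Ici t₀, (∫ s in t..(t + 1), g s) ≤ a₁) :
    ∀ ε > (0 : ℝ), ∃ tstar : ℝ, t₀ ≤ tstar ∧
      ∀ t ≥ tstar, y t ≤ a₁ * Real.exp (2 * lam) / (Real.exp lam - 1) + ε :=
  uniform_gronwall_variant_general lam a₁ t₀ hlam ha₁ g y y' hg hg0 hy0 hy hineq hgint
end

section
/- Let (X, d) be a metric space and S : ℝ≥0 → X → X a semigroup: S(0) = id and S(t + s) = S(t) ∘ S(s) for all t, s ≥ 0. Assume: (i) for each t ≥ 0, S(t) : X → X is continuous; (ii) there exists t₀ > 0 such that for every bounded set B ⊆ X, the image S(t₀)(B) has compact closure; (iii) there are sets B₀ ⊆ U ⊆ X with B₀ bounded and nonempty, U open, and B₀ absorbing in U: for every bounded B ⊆ U there exists T(B) > 0 with S(t)(B) ⊆ B₀ for all t > T(B). Define A = ω(B₀) = ⋂_{s ≥ 0} closure(⋃_{t ≥ s} S(t)(B₀)). Then A is nonempty and compact, and A attracts all bounded subsets of U: for every bounded B ⊆ U, sup_{x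 ∈ B} dist(S(t)(x), A) → 0 as t → ∞. -/
/-!
The ω-limit set `⋂_{s ≥ 0} closure (⋃_{t ≥ s} S t '' B₀)` is the filter ω-limit
`omegaLimit atTop S B₀`, so everything reduces to the compactness theory of ω-limits.
Splitting `S t = S t₀ ∘ S (t - t₀)` and absorbing `S (t - t₀) '' B₀` into `B₀` shows that the
orbit of `B₀` eventually stays in the compact set `closure (S t₀ '' B₀)`; hence `ω(B₀)` is a
nonempty compact set, and the orbit of `B₀` eventually enters each of its open neighbourhoods.
A bounded `B ⊆ U` is carried into `B₀` at some time `r`, after which its orbit follows that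
of `B₀`.
-/

open Set

/-- The ω-limit set of a set `B` under a semigroup `S` of (time-indexed) maps:
`ω(B) = ⋂_{s ≥ 0} closure (⋃_{t ≥ s} S t '' B)`. -/
def omegaLimitSet {X : Type*} [TopologicalSpace X] (S : ℝ → X → X) (B : Set X) : Set X :=
  ⋂ s ∈ Set.Ici (0 : ℝ), closure (⋃ t ∈ Set.Ici s, S t '' B)

open Filter

theorem omegaLimitSet_eq_omegaLimit {X : Type*} [TopologicalSpace X] (S : ℝ → X → X)
    (B : Set X) : omegaLimitSet S B = omegaLimit atTop S B := by
  rw [omegaLimit_def, (atTop_basis' (0 : ℝ)).biInter_mem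
    fun _ _ h ↦ closure_mono (image2_subset h Subset.rfl)]
  simp only [omegaLimitSet, ← iUnion_image_left, mem_Ici]

theorem exists_closure_image2_subset_of_eventually_mapsTo {τ α β : Type*} [TopologicalSpace β]
    {f : Filter τ} {ϕ : τ → α → β} {s : Set α} {c : Set β} (hc : IsClosed c)
    (h : ∀ᶠ t in f, MapsTo (ϕ t) s c) : ∃ v ∈ f, closure (image2 ϕ v s) ⊆ c :=
  ⟨_, h, closure_minimal (image2_subset_iff.2 fun _ ↦ id) hc⟩

theorem isCompact_omegaLimit_of_eventually_mapsTo {τ α β : Type*} [TopologicalSpace β]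
    [T2Space β] {f : Filter τ} {ϕ : τ → α → β} {s : Set α} {c : Set β} (hc : IsCompact c)
    (h : ∀ᶠ t in f, MapsTo (ϕ t) s c) : IsCompact (omegaLimit f ϕ s) := by
  obtain ⟨v, hv, hvc⟩ := exists_closure_image2_subset_of_eventually_mapsTo hc.isClosed h
  exact hc.of_isClosed_subset (isClosed_omegaLimit f ϕ s)
    ((omegaLimit_subset_closure_image2 f ϕ s hv).trans hvc)

section Semigroup

variable {X : Type*} {S : ℝ → X → X}
  (hSadd : ∀ t s : ℝ, 0 ≤ t → 0 ≤ s → S (t + s) = S t ∘ S s)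
include hSadd

theorem eventually_eq_comp_sub {r : ℝ} (hr : 0 ≤ r) :
    ∀ᶠ t in atTop, S t = S (t - r) ∘ S r ∧ S t = S r ∘ S (t - r) := by
  filter_upwards [eventually_ge_atTop r] with t ht
  have hsub : 0 ≤ t - r := sub_nonneg.2 ht
  constructor
  · simpa using hSadd (t - r) r hsub hr
  · simpa using hSadd r (t - r) hr hsub

theorem eventually_mapsTo_of_mapsTo_absorbing_set {B B₀ V : Set X} {r : ℝ} (hr : 0 ≤ r)
    (hBr : MapsTo (S r) B B₀) (hB₀ : ∀ᶠ t in atTop, MapsTo (S t) B₀ V) :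
    ∀ᶠ t in atTop, MapsTo (S t) B V := by
  filter_upwards [eventually_eq_comp_sub hSadd hr,
    (tendsto_atTop_add_const_right atTop (-r) tendsto_id).eventually hB₀] with t ht hV
  rw [ht.1, sub_eq_add_neg]
  exact hV.comp hBr

theorem eventually_mapsTo_image_of_eventually_mapsTo {B B₀ : Set X} {r : ℝ} (hr : 0 ≤ r)
    (hB : ∀ᶠ t in atTop, MapsTo (S t) B B₀) : ∀ᶠ t in atTop, MapsTo (S t) B (S r '' B₀) := by
  filter_upwards [eventually_eq_comp_sub hSadd hr,
    (tendsto_atTop_add_const_right atTop (-r) tendsto_id).eventually hB] with t ht hB'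
  rw [ht.2, sub_eq_add_neg]
  exact (mapsTo_image (S r) B₀).comp hB'

end Semigroup

theorem global_attractor_exists_and_attracts_general {X : Type*} [MetricSpace X]
    (S : ℝ → X → X)
    (hSadd : ∀ t s : ℝ, 0 ≤ t → 0 ≤ s → S (t + s) = S t ∘ S s)
    (hcpt : ∃ t₀ : ℝ, 0 < t₀ ∧
      ∀ B : Set X, Bornology.IsBounded B → IsCompact (closure (S t₀ '' B)))
    (B₀ U : Set X) (hB₀U : B₀ ⊆ U)
    (hB₀bdd : Bornology.IsBounded B₀) (hB₀ne : B₀.Nonempty)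
    (habs : ∀ B : Set X, B ⊆ U → Bornology.IsBounded B →
      ∃ T : ℝ, 0 < T ∧ ∀ t : ℝ, T < t → S t '' B ⊆ B₀) :
    (omegaLimitSet S B₀).Nonempty ∧ IsCompact (omegaLimitSet S B₀) ∧
      ∀ B : Set X, B ⊆ U → Bornology.IsBounded B →
        ∀ ε > (0 : ℝ), ∃ T : ℝ, ∀ t ≥ T, ∀ x ∈ B,
          Metric.infDist (S t x) (omegaLimitSet S B₀) ≤ ε := by
  obtain ⟨t₀, ht₀, hcpt⟩ := hcpt
  have hK : IsCompact (closure (S t₀ '' B₀)) := hcpt B₀ hB₀bdd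
  obtain ⟨T₀, -, hT₀⟩ := habs B₀ hB₀U hB₀bdd
  have hB₀B₀ : ∀ᶠ t in atTop, MapsTo (S t) B₀ B₀ :=
    (eventually_gt_atTop T₀).mono fun t ht ↦ mapsTo_iff_image_subset.2 (hT₀ t ht)
  have hB₀K : ∀ᶠ t in atTop, MapsTo (S t) B₀ (closure (S t₀ '' B₀)) :=
    (eventually_mapsTo_image_of_eventually_mapsTo hSadd ht₀.le hB₀B₀).mono
      fun _ h ↦ h.mono_right subset_closure
  rw [omegaLimitSet_eq_omegaLimit]
  have hne : (omegaLimit atTop S B₀).Nonempty := nonempty_omegaLimit_of_isCompact_absorbing _ _ _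
    hK (exists_closure_image2_subset_of_eventually_mapsTo hK.isClosed hB₀K) hB₀ne
  refine ⟨hne, isCompact_omegaLimit_of_eventually_mapsTo hK hB₀K, ?_⟩
  intro B hBU hBbdd ε hε
  obtain ⟨T, hT, hBT⟩ := habs B hBU hBbdd
  have hB₀ε := eventually_mapsTo_of_isCompact_absorbing_of_isOpen_of_omegaLimit_subset _ _ _ hK
    hB₀K Metric.isOpen_thickening (Metric.self_subset_thickening hε _)
  have hBε := eventually_mapsTo_of_mapsTo_absorbing_set hSadd (by linarith : 0 ≤ T + 1)
    (mapsTo_iff_image_subset.2 (hBT (T + 1) (by linarith))) hB₀ε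
  obtain ⟨T', hT'⟩ := eventually_atTop.1 hBε
  exact ⟨T', fun t ht x hx ↦ ((Metric.mem_thickening_iff_infDist_lt hne).1 (hT' t ht hx)).le⟩

/-- Existence and attraction part of the abstract global attractor theorem (Temam):
under continuity of the semigroup, compactness of `S t₀` for some `t₀ > 0`, and existence of a
bounded absorbing set `B₀` in an open set `U`, the ω-limit set `A = ω(B₀)` is nonempty, compact,
and attracts all bounded subsets of `U`. -/
theorem global_attractor_exists_and_attracts {X : Type*} [MetricSpace X]
    (S : ℝ → X → X)
    (hS0 : S 0 = id)
    (hSadd : ∀ t s : ℝ, 0 ≤ t → 0 ≤ s → S (t + s) = S t ∘ S s)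
    (hcont : ∀ t : ℝ, 0 ≤ t → Continuous (S t))
    (hcpt : ∃ t₀ : ℝ, 0 < t₀ ∧
      ∀ B : Set X, Bornology.IsBounded B → IsCompact (closure (S t₀ '' B)))
    (B₀ U : Set X) (hB₀U : B₀ ⊆ U) (hUopen : IsOpen U)
    (hB₀bdd : Bornology.IsBounded B₀) (hB₀ne : B₀.Nonempty)
    (habs : ∀ B : Set X, B ⊆ U → Bornology.IsBounded B →
      ∃ T : ℝ, 0 < T ∧ ∀ t : ℝ, T < t → S t '' B ⊆ B₀) :
    (omegaLimitSet S B₀).Nonempty ∧ IsCompact (omegaLimitSet S B₀) ∧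
      ∀ B : Set X, B ⊆ U → Bornology.IsBounded B →
        ∀ ε > (0 : ℝ), ∃ T : ℝ, ∀ t ≥ T, ∀ x ∈ B,
          Metric.infDist (S t x) (omegaLimitSet S B₀) ≤ ε :=
  global_attractor_exists_and_attracts_general S hSadd hcpt B₀ U hB₀U hB₀bdd hB₀ne habs
end

section
/- Let (X, d) be a metric space and S : ℝ≥0 → X → X a semigroup: S(0) = id and S(t + s) = S(t) ∘ S(s) for all t, s ≥ 0. Assume: (i) for each t ≥ 0, S(t) : X → X is continuous; (ii) there exists t₀ > 0 such that for every bounded set B ⊆ X, the image S(t₀)(B) has compact closure; (iii) there are sets B₀ ⊆ U ⊆ X with B₀ bounded and nonempty, U open, and B₀ absorbing in U: for every bounded B ⊆ U there exists T(B) > 0 with S(t)(B) ⊆ B₀ for all t > T(B). Define A = ω(B₀) = ⋂_{s ≥ 0} closure(⋃_{t ≥ s} S(t)(B₀)). Then A is invariant under the semigroup: S(t)(A) = A for every t ≥ 0. -/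
open Set

/-- Invariance part of the abstract global attractor theorem (Temam): the ω-limit set
`A = ω(B₀)` of the absorbing set is fully invariant, `S t '' A = A` for all `t ≥ 0`. -/
theorem global_attractor_invariant {X : Type*} [MetricSpace X]
    (S : ℝ → X → X)
    (hS0 : S 0 = id)
    (hSadd : ∀ t s : ℝ, 0 ≤ t → 0 ≤ s → S (t + s) = S t ∘ S s)
    (hcont : ∀ t : ℝ, 0 ≤ t → Continuous (S t))
    (hcpt : ∃ t₀ : ℝ, 0 < t₀ ∧
      ∀ B : Set X, Bornology.IsBounded B → IsCompact (closure (S t₀ '' B)))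
    (B₀ U : Set X) (hB₀U : B₀ ⊆ U) (hUopen : IsOpen U)
    (hB₀bdd : Bornology.IsBounded B₀) (hB₀ne : B₀.Nonempty)
    (habs : ∀ B : Set X, B ⊆ U → Bornology.IsBounded B →
      ∃ T : ℝ, 0 < T ∧ ∀ t : ℝ, T < t → S t '' B ⊆ B₀) :
    ∀ t : ℝ, 0 ≤ t → S t '' omegaLimitSet S B₀ = omegaLimitSet S B₀ := by
  intro t ht
  obtain ⟨t₀, ht₀, hK⟩ := hcpt
  obtain ⟨T₀, hT₀, habs₀⟩ := habs B₀ hB₀U hB₀bdd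
  apply Set.Subset.antisymm
  · -- forward inclusion: S t '' A ⊆ A
    rintro _ ⟨x, hx, rfl⟩
    simp only [omegaLimitSet, mem_iInter] at hx ⊢
    intro s hs
    have hs0 : (0 : ℝ) ≤ s := hs
    have hsub : S t '' (⋃ τ ∈ Set.Ici s, S τ '' B₀) ⊆ ⋃ τ ∈ Set.Ici s, S τ '' B₀ := by
      rintro _ ⟨w, hw, rfl⟩
      simp only [mem_iUnion] at hw ⊢
      obtain ⟨τ, hτ, bb, hbb, rfl⟩ := hw
      refine ⟨t + τ, by simp only [mem_Ici] at hτ ⊢; linarith, bb, hbb, ?_⟩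
      rw [hSadd t τ ht (le_trans hs0 hτ)]; rfl
    have h1 : S t x ∈ S t '' closure (⋃ τ ∈ Set.Ici s, S τ '' B₀) :=
      ⟨x, hx s hs, rfl⟩
    have h2 := image_closure_subset_closure_image (hcont t ht) h1
    exact closure_mono hsub h2
  · -- reverse inclusion: A ⊆ S t '' A
    intro y hy
    have hKc : IsCompact (closure (S t₀ '' B₀)) := hK B₀ hB₀bdd
    set M : ℝ := T₀ + t₀ + t + 1 with hM
    have hM0 : (0 : ℝ) ≤ M := by linarith
    have hchoice : ∀ n : ℕ, ∃ τ, M + n ≤ τ ∧ ∃ bb ∈ B₀,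
        dist y (S τ bb) < 1 / (n + 1) := by
      intro n
      have hyn : y ∈ closure (⋃ τ ∈ Set.Ici (M + n), S τ '' B₀) := by
        simp only [omegaLimitSet, mem_iInter] at hy
        exact hy (M + n) (by rw [mem_Ici]; have hn : (0:ℝ) ≤ (n:ℝ) := Nat.cast_nonneg n; linarith)
      rw [Metric.mem_closure_iff] at hyn
      obtain ⟨w, hw, hd⟩ := hyn (1 / (n + 1)) (by positivity)
      simp only [mem_iUnion] at hw
      obtain ⟨τ, hτ, bb, hbb, rfl⟩ := hw
      exact ⟨τ, hτ, bb, hbb, hd⟩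
    choose τ hτ b hb hd using hchoice
    have hτt : ∀ n : ℕ, (0 : ℝ) ≤ τ n - t := by
      intro n
      have h := hτ n
      have hn : (0 : ℝ) ≤ (n : ℝ) := Nat.cast_nonneg n
      linarith
    set z : ℕ → X := fun n => S (τ n - t) (b n) with hz
    have hzK : ∀ n, z n ∈ closure (S t₀ '' B₀) := by
      intro n
      have hn : (0 : ℝ) ≤ (n : ℝ) := Nat.cast_nonneg n
      have h := hτ n
      have h2 : (0 : ℝ) ≤ τ n - t - t₀ := by linarith
      have h3 : S (τ n - t - t₀) (b n) ∈ B₀ :=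
        habs₀ (τ n - t - t₀) (by linarith) ⟨b n, hb n, rfl⟩
      have h4 : z n = S t₀ (S (τ n - t - t₀) (b n)) := by
        have heq2 : S (τ n - t) = S t₀ ∘ S (τ n - t - t₀) := by
          rw [← hSadd t₀ (τ n - t - t₀) ht₀.le h2]; congr 1; ring
        show S (τ n - t) (b n) = _
        rw [heq2]; rfl
      rw [h4]
      exact subset_closure ⟨_, h3, rfl⟩
    obtain ⟨zlim, hzlimK, φ, hφ, hzt⟩ := hKc.tendsto_subseq hzK
    have hzlimA : zlim ∈ omegaLimitSet S B₀ := by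
      simp only [omegaLimitSet, mem_iInter]
      intro s hs
      refine mem_closure_of_tendsto hzt ?_
      filter_upwards [Filter.eventually_ge_atTop ⌈s⌉₊] with k hk
      simp only [Function.comp_apply, mem_iUnion]
      refine ⟨τ (φ k) - t, ?_, b (φ k), hb _, rfl⟩
      have h1 : s ≤ (k : ℝ) := le_trans (Nat.le_ceil s) (Nat.cast_le.mpr hk)
      have h2 : (k : ℝ) ≤ (φ k : ℝ) := Nat.cast_le.mpr hφ.le_apply
      have h3 := hτ (φ k)
      simp only [mem_Ici]
      linarith
    have heq : ∀ k : ℕ, S t (z (φ k)) = S (τ (φ k)) (b (φ k)) := by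
      intro k
      have h0 := hτt (φ k)
      have := hSadd t (τ (φ k) - t) ht h0
      have h1 : S (t + (τ (φ k) - t)) (b (φ k)) = S t (S (τ (φ k) - t) (b (φ k))) := by
        rw [this]; rfl
      have h2 : t + (τ (φ k) - t) = τ (φ k) := by ring
      rw [h2] at h1
      exact h1.symm
    have hty : Filter.Tendsto (fun k => S t (z (φ k))) Filter.atTop (nhds (S t zlim)) :=
      ((hcont t ht).tendsto zlim).comp hzt
    have hty2 : Filter.Tendsto (fun k => S t (z (φ k))) Filter.atTop (nhds y) := by
      rw [tendsto_iff_dist_tendsto_zero]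
      have hbound : ∀ k : ℕ, dist (S t (z (φ k))) y ≤ 1 / (k + 1 : ℝ) := by
        intro k
        rw [heq k, dist_comm]
        refine le_trans (hd (φ k)).le ?_
        have h2 : (k : ℝ) ≤ (φ k : ℝ) := Nat.cast_le.mpr hφ.le_apply
        have hk0 : (0 : ℝ) < (k : ℝ) + 1 := by positivity
        have hφ0 : (0 : ℝ) < (φ k : ℝ) + 1 := by positivity
        rw [div_le_div_iff₀ hφ0 hk0]
        linarith
      refine squeeze_zero (fun k => dist_nonneg) hbound ?_
      exact tendsto_one_div_add_atTop_nhds_zero_nat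
    exact ⟨zlim, hzlimA, tendsto_nhds_unique hty hty2⟩
end

section
/- Let (X, d) be a metric space and S : ℝ≥0 → X → X a semigroup: S(0) = id and S(t + s) = S(t) ∘ S(s) for all t, s ≥ 0. Assume: (i) for each t ≥ 0, S(t) : X → X is continuous; (ii) there exists t₀ > 0 such that for every bounded set B ⊆ X, the image S(t₀)(B) has compact closure; (iii) there are sets B₀ ⊆ U ⊆ X with B₀ bounded and nonempty, U open, and B₀ absorbing in U: for every bounded B ⊆ U there exists T(B) > 0 with S(t)(B) ⊆ B₀ for all t > T(B). Define A = ω(B₀) = ⋂_{s ≥ 0} closure(⋃_{t ≥ s} S(t)(B₀)). Then A is the maximal bounded invariant set in U: every bounded set B ⊆ U satisfying S(t)(B) = B for all t ≥ 0 is contained in A. -/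
open Set

/-- Maximality part of the abstract global attractor theorem (Temam): the ω-limit set
`A = ω(B₀)` of the absorbing set contains every bounded invariant subset of `U`. -/
theorem global_attractor_maximal {X : Type*} [MetricSpace X]
    (S : ℝ → X → X)
    (hS0 : S 0 = id)
    (hSadd : ∀ t s : ℝ, 0 ≤ t → 0 ≤ s → S (t + s) = S t ∘ S s)
    (hcont : ∀ t : ℝ, 0 ≤ t → Continuous (S t))
    (hcpt : ∃ t₀ : ℝ, 0 < t₀ ∧
      ∀ B : Set X, Bornology.IsBounded B → IsCompact (closure (S t₀ '' B)))
    (B₀ U : Set X) (hB₀U : B₀ ⊆ U) (hUopen : IsOpen U)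
    (hB₀bdd : Bornology.IsBounded B₀) (hB₀ne : B₀.Nonempty)
    (habs : ∀ B : Set X, B ⊆ U → Bornology.IsBounded B →
      ∃ T : ℝ, 0 < T ∧ ∀ t : ℝ, T < t → S t '' B ⊆ B₀) :
    ∀ B : Set X, B ⊆ U → Bornology.IsBounded B →
      (∀ t : ℝ, 0 ≤ t → S t '' B = B) → B ⊆ omegaLimitSet S B₀ := by
  intro B hBU hBbdd hinv x hx
  obtain ⟨T, hT, habsB⟩ := habs B hBU hBbdd
  refine mem_iInter₂.mpr fun s hs => subset_closure ?_
  have hs0 : (0:ℝ) ≤ s := hs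
  have hx' : x ∈ S (s + (T + 1)) '' B := by
    rw [hinv _ (by linarith)]; exact hx
  rw [hSadd s (T + 1) hs0 (by linarith)] at hx'
  obtain ⟨z, hz, hzx⟩ := hx'
  exact mem_biUnion (show s ∈ Set.Ici s from le_refl s)
    ⟨S (T + 1) z, habsB (T + 1) (by linarith) ⟨z, hz, rfl⟩, hzx⟩
end

section
/- Let (X, d) be a metric space and S : ℝ≥0 → X → X a semigroup: S(0) = id and S(t + s) = S(t) ∘ S(s) for all t, s ≥ 0. Assume: (i) for each t ≥ 0, S(t) : X → X is continuous; (ii) there exists t₀ > 0 such that for every bounded set B ⊆ X, the image S(t₀)(B) has compact closure; (iii) there are sets B₀ ⊆ U ⊆ X with B₀ bounded and nonempty, U open, and B₀ absorbing in U: for every bounded B ⊆ U there exists T(B) > 0 with S(t)(B) ⊆ B₀ for all t > T(B). Define A = ω(B₀) = ⋂_{s ≥ 0} closure(⋃_{t ≥ s} S(t)(B₀)). Then A is the minimal closed set attracting B₀: for every closed set F ⊆ X such that sup_{x ∈ B₀} dist(S(t)(x), F) → 0 as t → ∞, one has A ⊆ F. -/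
open Set

theorem omegaLimitSet_subset_of_eventually_mem {X : Type*} [TopologicalSpace X]
    {S : ℝ → X → X} {B C : Set X} (hC : IsClosed C)
    (hBC : ∃ T : ℝ, ∀ t ≥ T, ∀ x ∈ B, S t x ∈ C) : omegaLimitSet S B ⊆ C := by
  obtain ⟨T, hT⟩ := hBC
  intro y hy
  have hy_tail : y ∈ closure (⋃ t ∈ Ici (max 0 T), S t '' B) :=
    mem_iInter₂.1 hy (max 0 T) (le_max_left 0 T)
  refine closure_minimal (iUnion₂_subset fun t ht => ?_) hC hy_tail
  rintro _ ⟨x, hx, rfl⟩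
  exact hT t (le_trans (le_max_right 0 T) ht) x hx

theorem global_attractor_minimal_general {X : Type*} [MetricSpace X]
    (S : ℝ → X → X)
    (B₀ : Set X) :
    ∀ F : Set X, IsClosed F →
      (∀ ε > (0 : ℝ), ∃ T : ℝ, ∀ t ≥ T, ∀ x ∈ B₀,
        EMetric.infEdist (S t x) F ≤ ENNReal.ofReal ε) →
      omegaLimitSet S B₀ ⊆ F := by
  intro F hF hattr
  rw [← hF.closure_eq, Metric.closure_eq_iInter_cthickening]
  exact subset_iInter₂ fun ε hε =>
    omegaLimitSet_subset_of_eventually_mem Metric.isClosed_cthickening (hattr ε hε)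

/-- Minimality part of the abstract global attractor theorem (Temam): the ω-limit set
`A = ω(B₀)` of the absorbing set is contained in every closed set `F` which attracts `B₀`,
i.e. such that `sup_{x ∈ B₀} dist (S t x) F → 0` as `t → ∞` (here expressed via the extended
distance `infEdist`, so that the empty set does not attract). -/
theorem global_attractor_minimal {X : Type*} [MetricSpace X]
    (S : ℝ → X → X)
    (hS0 : S 0 = id)
    (hSadd : ∀ t s : ℝ, 0 ≤ t → 0 ≤ s → S (t + s) = S t ∘ S s)
    (hcont : ∀ t : ℝ, 0 ≤ t → Continuous (S t))
    (hcpt : ∃ t₀ : ℝ, 0 < t₀ ∧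
      ∀ B : Set X, Bornology.IsBounded B → IsCompact (closure (S t₀ '' B)))
    (B₀ U : Set X) (hB₀U : B₀ ⊆ U) (hUopen : IsOpen U)
    (hB₀bdd : Bornology.IsBounded B₀) (hB₀ne : B₀.Nonempty)
    (habs : ∀ B : Set X, B ⊆ U → Bornology.IsBounded B →
      ∃ T : ℝ, 0 < T ∧ ∀ t : ℝ, T < t → S t '' B ⊆ B₀) :
    ∀ F : Set X, IsClosed F →
      (∀ ε > (0 : ℝ), ∃ T : ℝ, ∀ t ≥ T, ∀ x ∈ B₀,
        EMetric.infEdist (S t x) F ≤ ENNReal.ofReal ε) →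
      omegaLimitSet S B₀ ⊆ F :=
  global_attractor_minimal_general S B₀
end

section
/- Let X be a real normed vector space, with metric d(x, y) = ‖x − y‖, and S : ℝ≥0 → X → X a semigroup: S(0) = id and S(t + s) = S(t) ∘ S(s) for all t, s ≥ 0. Assume: (i) for each t ≥ 0, S(t) : X → X is continuous; (ii) there exists t₀ > 0 such that for every bounded set B ⊆ X, the image S(t₀)(B) has compact closure; (iii) there are sets B₀ ⊆ U ⊆ X with B₀ bounded and nonempty, U open and convex, and B₀ absorbing in U: for every bounded B ⊆ U there exists T(B) > 0 with S(t)(B) ⊆ B₀ for all t > T(B); (iv) for every x ∈ X, the map t ↦ S(t)(x) is continuous from ℝ≥0 to X. Then the set A = ω(B₀) = ⋂_{s ≥ 0} closure(⋃_{t ≥ s} S(t)(B₀)) is connected. -/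
/-!
The convex hull `C` of `B₀` is still bounded and contained in `U`, hence absorbed by `B₀`, and
this forces `ω(B₀) = ω(C)`. Each tail `⋃_{t ≥ s} S t '' C` is preconnected: every piece
`S t '' C` is, and all of them are chained together by the continuous trajectory of one point
of `C`. For large `s` the closures of the tails lie in the compact set `closure (S t₀ '' B₀)`,
and a decreasing family of compact connected sets has connected intersection.
-/

open Set

theorem IsConnected.iInter_of_directed {X ι : Type*} [TopologicalSpace X] [T2Space X]
    [Nonempty ι] {K : ι → Set X} (hd : Directed (· ⊇ ·) K) (hc : ∀ i, IsCompact (K i))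
    (hK : ∀ i, IsConnected (K i)) : IsConnected (⋂ i, K i) := by
  have hcl : ∀ i, IsClosed (K i) := fun i ↦ (hc i).isClosed
  refine ⟨IsCompact.nonempty_iInter_of_directed_nonempty_isCompact_isClosed K hd
    (fun i ↦ (hK i).nonempty) hc hcl, ?_⟩
  obtain ⟨i₀⟩ := ‹Nonempty ι›
  have hΩ : IsCompact (⋂ i, K i) := (hc i₀).of_isClosed_subset (isClosed_iInter hcl)
    (iInter_subset K i₀)
  rw [isPreconnected_iff_subset_of_fully_disjoint_closed hΩ.isClosed]
  intro u v hu hv hcover huv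
  -- Separate the compact pieces of the intersection by open sets; some `K i` already lies
  -- in their union, and its preconnectedness decides the side.
  obtain ⟨u', v', hu', hv', hsu', hsv', hdisj⟩ := SeparatedNhds.of_isCompact_isCompact
    (hΩ.inter_right hu) (hΩ.inter_right hv) (huv.mono inter_subset_right inter_subset_right)
  have hnhds : ∀ x ∈ ⋂ i, K i, u' ∪ v' ∈ nhds x := fun x hx ↦
    (hu'.union hv').mem_nhds <| (hcover hx).imp (fun h ↦ hsu' ⟨hx, h⟩) (fun h ↦ hsv' ⟨hx, h⟩)
  obtain ⟨i, hi⟩ := exists_subset_nhds_of_isCompact' hd hc hcl hnhds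
  refine ((hK i).isPreconnected.subset_or_subset hu' hv' hdisj hi).imp ?_ ?_
  · intro hKu x hx
    refine (hcover hx).resolve_right fun hxv ↦ hdisj.ne_of_mem ?_ (hsv' ⟨hx, hxv⟩) rfl
    exact hKu (iInter_subset K i hx)
  · intro hKv x hx
    refine (hcover hx).resolve_left fun hxu ↦ hdisj.ne_of_mem (hsu' ⟨hx, hxu⟩) ?_ rfl
    exact hKv (iInter_subset K i hx)

def orbitAfter {X Y : Type*} (S : ℝ → X → Y) (B : Set X) (s : ℝ) : Set Y :=
  ⋃ t ∈ Ici s, S t '' B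

section orbitAfter

variable {X Y : Type*} {S : ℝ → X → Y} {B : Set X}

theorem antitone_orbitAfter : Antitone (orbitAfter S B) := fun _ _ h ↦
  biUnion_subset_biUnion_left (Ici_subset_Ici.mpr h)

theorem orbitAfter_nonempty (hB : B.Nonempty) (s : ℝ) : (orbitAfter S B s).Nonempty :=
  let ⟨x, hx⟩ := hB
  ⟨S s x, mem_biUnion self_mem_Ici (mem_image_of_mem _ hx)⟩

theorem isPreconnected_orbitAfter [TopologicalSpace X] [TopologicalSpace Y] {x₀ : X} {s : ℝ}
    (hB : IsPreconnected B) (hx₀ : x₀ ∈ B) (hS : ∀ t, s ≤ t → ContinuousOn (S t) B)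
    (horbit : ContinuousOn (fun t ↦ S t x₀) (Ici s)) : IsPreconnected (orbitAfter S B s) := by
  set γ := (fun t ↦ S t x₀) '' Ici s
  have hγ : IsPreconnected γ := isPreconnected_Ici.image _ horbit
  have hγsub : γ ⊆ orbitAfter S B s := by
    rintro _ ⟨t, ht, rfl⟩
    exact mem_biUnion ht (mem_image_of_mem _ hx₀)
  refine isPreconnected_of_forall (S s x₀) fun y hy ↦ ?_
  obtain ⟨t, ht, hyt⟩ := mem_iUnion₂.mp hy
  refine ⟨S t '' B ∪ γ, union_subset (subset_biUnion_of_mem (u := fun t ↦ S t '' B) ht) hγsub,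
    Or.inr ⟨s, self_mem_Ici, rfl⟩, Or.inl hyt, ?_⟩
  exact (hB.image _ (hS t ht)).union (S t x₀) (mem_image_of_mem _ hx₀) ⟨t, ht, rfl⟩ hγ

end orbitAfter

section omegaLimitSet

variable {X : Type*} [TopologicalSpace X] {S : ℝ → X → X}

theorem omegaLimitSet_eq_iInter_Ici (B : Set X) {a : ℝ} (ha : 0 ≤ a) :
    omegaLimitSet S B = ⋂ s : Ici a, closure (orbitAfter S B s) := by
  refine Subset.antisymm (fun x hx ↦ mem_iInter.mpr fun s ↦ mem_iInter₂.mp hx s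
    (ha.trans s.2)) fun x hx ↦ mem_iInter₂.mpr fun s _ ↦ ?_
  exact closure_mono (antitone_orbitAfter (le_max_left s a))
    (mem_iInter.mp hx ⟨max s a, le_max_right s a⟩)

theorem omegaLimitSet_mono {B C : Set X} (h : B ⊆ C) : omegaLimitSet S B ⊆ omegaLimitSet S C :=
  biInter_mono subset_rfl fun _ _ ↦ closure_mono <| iUnion₂_mono fun _ _ ↦ image_mono h

end omegaLimitSet

section semigroup

variable {X : Type*} {S : ℝ → X → X}
  (hSadd : ∀ t s : ℝ, 0 ≤ t → 0 ≤ s → S (t + s) = S t ∘ S s)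
include hSadd

theorem orbitAfter_subset_image {B : Set X} {r s : ℝ} (hr : 0 ≤ r) (hs : 0 ≤ s) :
    orbitAfter S B (s + r) ⊆ S r '' orbitAfter S B s := by
  rintro _ ⟨_, ⟨t, rfl⟩, _, ⟨ht, rfl⟩, x, hx, rfl⟩
  have ht' : s ≤ t - r := by simp only [mem_Ici] at ht; linarith
  refine ⟨S (t - r) x, mem_biUnion ht' (mem_image_of_mem _ hx), ?_⟩
  rw [← Function.comp_apply (f := S r), ← hSadd r _ hr (hs.trans ht'), add_sub_cancel]

theorem orbitAfter_subset_orbitAfter_image {B : Set X} {r s : ℝ} (hr : 0 ≤ r) (hs : 0 ≤ s) :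
    orbitAfter S B (s + r) ⊆ orbitAfter S (S r '' B) s := by
  rintro _ ⟨_, ⟨t, rfl⟩, _, ⟨ht, rfl⟩, x, hx, rfl⟩
  have ht' : s ≤ t - r := by simp only [mem_Ici] at ht; linarith
  refine mem_biUnion ht' ⟨S r x, mem_image_of_mem _ hx, ?_⟩
  rw [← Function.comp_apply (f := S (t - r)), ← hSadd _ r (hs.trans ht') hr, sub_add_cancel]

theorem omegaLimitSet_subset_of_image_subset [TopologicalSpace X] {B C : Set X} {r : ℝ}
    (hr : 0 ≤ r) (hC : S r '' C ⊆ B) : omegaLimitSet S C ⊆ omegaLimitSet S B := by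
  refine fun x hx ↦ mem_iInter₂.mpr fun s hs ↦ closure_mono ?_ (mem_iInter₂.mp hx (s + r)
    (add_nonneg hs hr))
  exact (orbitAfter_subset_orbitAfter_image hSadd hr hs).trans
    (iUnion₂_mono fun _ _ ↦ image_mono hC)

end semigroup

theorem global_attractor_connected_general {X : Type*} [NormedAddCommGroup X] [NormedSpace ℝ X]
    (S : ℝ → X → X)
    (hSadd : ∀ t s : ℝ, 0 ≤ t → 0 ≤ s → S (t + s) = S t ∘ S s)
    (hcont : ∀ t : ℝ, 0 ≤ t → Continuous (S t))
    (hcpt : ∃ t₀ : ℝ, 0 < t₀ ∧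
      ∀ B : Set X, Bornology.IsBounded B → IsCompact (closure (S t₀ '' B)))
    (B₀ U : Set X) (hB₀U : B₀ ⊆ U) (hUconv : Convex ℝ U)
    (hB₀bdd : Bornology.IsBounded B₀) (hB₀ne : B₀.Nonempty)
    (habs : ∀ B : Set X, B ⊆ U → Bornology.IsBounded B →
      ∃ T : ℝ, 0 < T ∧ ∀ t : ℝ, T < t → S t '' B ⊆ B₀)
    (htraj : ∀ x : X, ContinuousOn (fun t : ℝ => S t x) (Set.Ici (0 : ℝ))) :
    IsConnected (omegaLimitSet S B₀) := by
  obtain ⟨t₀, ht₀, hcptB⟩ := hcpt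
  set C := convexHull ℝ B₀
  have hB₀C : B₀ ⊆ C := subset_convexHull ℝ B₀
  obtain ⟨T, hT, habsC⟩ :=
    habs C (convexHull_min hB₀U hUconv) (isBounded_convexHull.mpr hB₀bdd)
  obtain ⟨x₀, hx₀⟩ := hB₀ne
  have hCB₀ : orbitAfter S C (T + 1) ⊆ B₀ :=
    iUnion₂_subset fun t ht ↦ habsC t (by simp only [mem_Ici] at ht; linarith)
  rw [(omegaLimitSet_mono hB₀C).antisymm (omegaLimitSet_subset_of_image_subset hSadd
    (by positivity) (habsC (T + 1) (by linarith))),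
    omegaLimitSet_eq_iInter_Ici C (by positivity : (0 : ℝ) ≤ T + 1 + t₀)]
  have : Nonempty (Ici (T + 1 + t₀)) := ⟨⟨_, self_mem_Ici⟩⟩
  refine IsConnected.iInter_of_directed
    ((monotone_closure X).comp_antitone (antitone_orbitAfter.comp_monotone (Subtype.mono_coe _))
      |>.directed_ge) (fun s ↦ ?_) (fun s ↦ ?_)
  · have hs : T + 1 + t₀ ≤ (s : ℝ) := s.2
    refine (hcptB B₀ hB₀bdd).of_isClosed_subset isClosed_closure (closure_mono ?_)
    calc orbitAfter S C s = orbitAfter S C (s - t₀ + t₀) := by rw [sub_add_cancel]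
      _ ⊆ S t₀ '' orbitAfter S C (s - t₀) := orbitAfter_subset_image hSadd ht₀.le (by linarith)
      _ ⊆ S t₀ '' B₀ := image_mono (antitone_orbitAfter (by linarith) |>.trans hCB₀)
  · have hs : 0 ≤ (s : ℝ) := by have := mem_Ici.mp s.2; linarith
    exact ⟨(orbitAfter_nonempty ⟨x₀, hB₀C hx₀⟩ s).closure,
      (isPreconnected_orbitAfter (convex_convexHull ℝ B₀).isPreconnected (hB₀C hx₀)
        (fun t ht ↦ (hcont t (hs.trans ht)).continuousOn)
        ((htraj x₀).mono (Ici_subset_Ici.mpr hs))).closure⟩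

/-- Connectedness part of the abstract global attractor theorem (Temam): in a normed space,
if in addition the absorbing open set `U` is convex and the trajectories `t ↦ S t x` are
continuous in time, then the attractor `A = ω(B₀)` is connected. -/
theorem global_attractor_connected {X : Type*} [NormedAddCommGroup X] [NormedSpace ℝ X]
    (S : ℝ → X → X)
    (hS0 : S 0 = id)
    (hSadd : ∀ t s : ℝ, 0 ≤ t → 0 ≤ s → S (t + s) = S t ∘ S s)
    (hcont : ∀ t : ℝ, 0 ≤ t → Continuous (S t))
    (hcpt : ∃ t₀ : ℝ, 0 < t₀ ∧
      ∀ B : Set X, Bornology.IsBounded B → IsCompact (closure (S t₀ '' B)))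
    (B₀ U : Set X) (hB₀U : B₀ ⊆ U) (hUopen : IsOpen U) (hUconv : Convex ℝ U)
    (hB₀bdd : Bornology.IsBounded B₀) (hB₀ne : B₀.Nonempty)
    (habs : ∀ B : Set X, B ⊆ U → Bornology.IsBounded B →
      ∃ T : ℝ, 0 < T ∧ ∀ t : ℝ, T < t → S t '' B ⊆ B₀)
    (htraj : ∀ x : X, ContinuousOn (fun t : ℝ => S t x) (Set.Ici (0 : ℝ))) :
    IsConnected (omegaLimitSet S B₀) :=
  global_attractor_connected_general S hSadd hcont hcpt B₀ U hB₀U hUconv hB₀bdd hB₀ne habs htraj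
end
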